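/- Every abelian group of cardinality at most 2^ℵ₀ admits a faithful action on a countable set. -/

import Mathlib

/-!
Write `B` for `A` viewed as an additive group. A vector space of cardinality at most `𝔠` over a
field `K` has dimension at most `𝔠 = dim (ℕ → K)` (Erdős–Kaplansky), so it embeds linearly into
`ℕ → K`. Hence `B → ℚ ⊗ B → (ℕ → ℚ)` is a homomorphism with torsion kernel, and for each prime
`p` the `ZMod p`-vector space `B[p]` embeds into `ℕ → ℚ/ℤ`; as `ℕ → ℚ/ℤ` is divisible, hence
injective, this embedding extends to all of `B`. A nonzero torsion element has a nonzero multiple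
in some `B[p]`, so together these maps embed `B` into `(ℕ → ℚ) × ∏ₚ (ℕ → ℚ/ℤ)`. A countable
product of countable groups acts faithfully on the disjoint union of its factors.
-/

open Cardinal Function TensorProduct

universe u v

def CountablyRepresentable (G : Type*) [Group G] : Prop :=
  ∃ (X : Type) (_ : Countable X) (φ : G →* Equiv.Perm X), Injective φ

namespace CountablyRepresentable

theorem of_injective {G H : Type*} [Group G] [Group H] (f : G →* H) (hf : Injective f)
    (hH : CountablyRepresentable H) : CountablyRepresentable G :=
  let ⟨X, hX, φ, hφ⟩ := hH
  ⟨X, hX, φ.comp f, hφ.comp hf⟩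

theorem of_countable (G : Type) [Group G] [Countable G] : CountablyRepresentable G :=
  ⟨G, inferInstance, MulAction.toPermHom G G, MulAction.toPerm_injective⟩

theorem prod {G H : Type*} [Group G] [Group H] (hG : CountablyRepresentable G)
    (hH : CountablyRepresentable H) : CountablyRepresentable (G × H) :=
  let ⟨X, _, φ, hφ⟩ := hG
  let ⟨Y, _, ψ, hψ⟩ := hH
  ⟨X ⊕ Y, inferInstance, (Equiv.Perm.sumCongrHom X Y).comp (φ.prodMap ψ),
    Equiv.Perm.sumCongrHom_injective.comp (Prod.map_injective.mpr ⟨hφ, hψ⟩)⟩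

theorem pi {ι : Type} [Countable ι] {G : ι → Type*} [∀ i, Group (G i)]
    (hG : ∀ i, CountablyRepresentable (G i)) : CountablyRepresentable (∀ i, G i) := by
  choose X hX φ hφ using hG
  exact ⟨Σ i, X i, inferInstance,
    (Equiv.Perm.sigmaCongrRightHom X).comp (MonoidHom.piMap φ),
    Equiv.Perm.sigmaCongrRightHom_injective.comp (Pi.map_injective.mpr hφ)⟩

theorem multiplicative_of_countable (G : Type) [AddGroup G] [Countable G] :
    CountablyRepresentable (Multiplicative G) :=
  have : Countable (Multiplicative G) := ‹Countable G›
  of_countable _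

theorem multiplicative_pi {ι : Type} [Countable ι] {G : ι → Type*} [∀ i, AddGroup (G i)]
    (hG : ∀ i, CountablyRepresentable (Multiplicative (G i))) :
    CountablyRepresentable (Multiplicative (∀ i, G i)) :=
  (pi hG).of_injective (MulEquiv.piMultiplicative G).toMonoidHom (MulEquiv.injective _)

theorem multiplicative_prod {G H : Type*} [AddGroup G] [AddGroup H]
    (hG : CountablyRepresentable (Multiplicative G))
    (hH : CountablyRepresentable (Multiplicative H)) :
    CountablyRepresentable (Multiplicative (G × H)) :=
  (hG.prod hH).of_injective (MulEquiv.prodMultiplicative G H).toMonoidHom (MulEquiv.injective _)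

end CountablyRepresentable

theorem continuum_le_mk_nat_fun (K : Type v) [Nontrivial K] : 𝔠 ≤ #(ℕ → K) :=
  calc 𝔠 = 2 ^ ℵ₀ := two_power_aleph0.symm
    _ ≤ #K ^ ℵ₀ := power_le_power_right (two_le_iff.mpr (exists_pair_ne K))
    _ = #(ℕ → K) := by simp

theorem exists_injective_linearMap_nat_fun (K : Type v) [Field K] (V : Type u) [AddCommGroup V]
    [Module K V] (hV : #V ≤ 𝔠) : ∃ f : V →ₗ[K] (ℕ → K), Injective f := by
  refine lift_rank_le_iff_exists_linearMap.mp ?_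
  rw [rank_fun_infinite]
  calc lift.{v} (Module.rank K V) ≤ lift.{v} 𝔠 := lift_le.mpr ((rank_le_card K V).trans hV)
    _ = lift.{u} 𝔠 := by simp
    _ ≤ lift.{u} #(ℕ → K) := lift_le.mpr (continuum_le_mk_nat_fun K)

theorem isOfFinAddOrder_of_one_tmul_eq_zero {B : Type u} [AddCommGroup B] {x : B}
    (hx : (1 : ℚ) ⊗ₜ[ℤ] x = 0) : IsOfFinAddOrder x := by
  obtain ⟨s, hs⟩ := (IsLocalizedModule.eq_zero_iff (nonZeroDivisors ℤ)
    (TensorProduct.mk ℤ ℚ B 1)).mp hx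
  exact isOfFinAddOrder_iff_zsmul_eq_zero.mpr ⟨s, nonZeroDivisors.coe_ne_zero s, hs⟩

theorem mk_rat_tensorProduct_le (B : Type u) [AddCommGroup B] (hB : #B ≤ 𝔠) :
    #(ℚ ⊗[ℤ] B) ≤ 𝔠 :=
  calc #(ℚ ⊗[ℤ] B) ≤ #(B × nonZeroDivisors ℤ) :=
        mk_le_of_surjective (IsLocalizedModule.mk'_surjective _ (TensorProduct.mk ℤ ℚ B 1))
    _ = #B * lift #(nonZeroDivisors ℤ) := by simp [mk_prod]
    _ ≤ 𝔠 * ℵ₀ := mul_le_mul' hB (by simp)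
    _ = 𝔠 := continuum_mul_aleph0

theorem exists_addMonoidHom_rat_ker_isOfFinAddOrder (B : Type u) [AddCommGroup B]
    (hB : #B ≤ 𝔠) : ∃ f : B →+ (ℕ → ℚ), ∀ x, f x = 0 → IsOfFinAddOrder x := by
  obtain ⟨u, hu⟩ := exists_injective_linearMap_nat_fun ℚ _ (mk_rat_tensorProduct_le B hB)
  refine ⟨u.toAddMonoidHom.comp (TensorProduct.mk ℤ ℚ B 1).toAddMonoidHom, fun x hx => ?_⟩
  exact isOfFinAddOrder_of_one_tmul_eq_zero (hu (hx.trans (map_zero u).symm))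

instance : Countable (AddCircle (1 : ℚ)) := QuotientAddGroup.mk_surjective.countable

theorem addOrderOf_inv_natCast_ratCircle {n : ℕ} (hn : 0 < n) :
    addOrderOf (((n : ℚ)⁻¹ : ℚ) : AddCircle (1 : ℚ)) = n := by
  simpa using AddCircle.addOrderOf_period_div (p := (1 : ℚ)) hn

noncomputable def ZMod.toRatCircle (n : ℕ) [NeZero n] : ZMod n →+ AddCircle (1 : ℚ) :=
  ZMod.lift n ⟨zmultiplesHom (AddCircle (1 : ℚ)) (((n : ℚ)⁻¹ : ℚ) : AddCircle (1 : ℚ)), by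
    have := addOrderOf_nsmul_eq_zero (((n : ℚ)⁻¹ : ℚ) : AddCircle (1 : ℚ))
    rwa [addOrderOf_inv_natCast_ratCircle (NeZero.pos n), ← natCast_zsmul] at this⟩

theorem ZMod.toRatCircle_injective (n : ℕ) [NeZero n] : Injective (ZMod.toRatCircle n) := by
  refine (ZMod.lift_injective (n := n)).mpr fun m hm => ?_
  rw [zmultiplesHom_apply, ← addOrderOf_dvd_iff_zsmul_eq_zero,
    addOrderOf_inv_natCast_ratCircle (NeZero.pos n)] at hm
  exact (ZMod.intCast_zmod_eq_zero_iff_dvd m n).mpr hm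

theorem exists_injective_addMonoidHom_of_nsmul_eq_zero {V : Type u} [AddCommGroup V] (p : ℕ)
    [Fact p.Prime] (hp : ∀ x : V, p • x = 0) (hV : #V ≤ 𝔠) :
    ∃ f : V →+ (ℕ → AddCircle (1 : ℚ)), Injective f := by
  let := AddCommGroup.zmodModule hp
  obtain ⟨u, hu⟩ := exists_injective_linearMap_nat_fun (ZMod p) V hV
  exact ⟨(AddMonoidHom.compLeft (ZMod.toRatCircle p) ℕ).comp u.toAddMonoidHom,
    (ZMod.toRatCircle_injective p).comp_left.comp hu⟩

theorem exists_addMonoidHom_ratCircle_injOn_torsionBy (B : Type u) [AddCommGroup B]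
    (hB : #B ≤ 𝔠) (p : ℕ) [Fact p.Prime] :
    ∃ f : B →+ (ℕ → AddCircle (1 : ℚ)), Set.InjOn f (AddSubgroup.torsionBy B p) := by
  obtain ⟨g, hg⟩ := exists_injective_addMonoidHom_of_nsmul_eq_zero p
    (AddSubgroup.torsionBy.nsmul (A := B) (n := p))
    ((mk_le_of_injective Subtype.val_injective).trans hB)
  obtain ⟨f, hf⟩ := (Module.Baer.of_divisible _).extension_property_addMonoidHom
    (AddSubgroup.torsionBy B p).subtype Subtype.val_injective g
  refine ⟨f, fun y hy z hz hyz => ?_⟩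
  have : g ⟨y, hy⟩ = g ⟨z, hz⟩ := by rw [← hf]; exact hyz
  exact congrArg Subtype.val (hg this)

theorem IsOfFinAddOrder.exists_prime_nsmul_eq_zero {G : Type u} [AddGroup G] {x : G}
    (hx : IsOfFinAddOrder x) (hx0 : x ≠ 0) :
    ∃ p : ℕ, p.Prime ∧ ∃ n : ℕ, n • x ≠ 0 ∧ p • n • x = 0 := by
  have hord : addOrderOf x ≠ 1 := mt AddMonoid.addOrderOf_eq_one_iff.mp hx0
  set p := (addOrderOf x).minFac
  have hp : addOrderOf ((addOrderOf x / p) • x) = p :=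
    addOrderOf_nsmul_addOrderOf_sub hx.addOrderOf_pos.ne' (Nat.minFac_dvd _)
  refine ⟨p, Nat.minFac_prime hord, addOrderOf x / p, fun h => ?_, ?_⟩
  · rw [h, addOrderOf_zero] at hp
    exact (Nat.minFac_prime hord).one_lt.ne hp
  · simpa only [hp] using addOrderOf_nsmul_eq_zero ((addOrderOf x / p) • x)

theorem exists_injective_addMonoidHom_rat_prod_ratCircle (B : Type u) [AddCommGroup B]
    (hB : #B ≤ 𝔠) :
    ∃ Φ : B →+ (ℕ → ℚ) × (Nat.Primes → ℕ → AddCircle (1 : ℚ)), Injective Φ := by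
  obtain ⟨f, hf⟩ := exists_addMonoidHom_rat_ker_isOfFinAddOrder B hB
  choose g hg using fun p : Nat.Primes =>
    have : Fact (p : ℕ).Prime := ⟨p.2⟩
    exists_addMonoidHom_ratCircle_injOn_torsionBy B hB p
  refine ⟨f.prod (AddMonoidHom.pi g), (injective_iff_map_eq_zero _).mpr fun x hx => ?_⟩
  obtain ⟨hfx, hgx⟩ := Prod.mk_eq_zero.mp hx
  by_contra hx0
  obtain ⟨p, hp, n, hnx, hpnx⟩ := (hf x hfx).exists_prime_nsmul_eq_zero hx0
  have hgpx : g ⟨p, hp⟩ x = 0 := congrFun hgx ⟨p, hp⟩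
  refine hnx (hg ⟨p, hp⟩ (AddSubgroup.torsionBy.nsmul_iff.mpr hpnx) (zero_mem _) ?_)
  rw [map_nsmul, hgpx, nsmul_zero, map_zero]

/-- Every abelian group of cardinality at most `2 ^ ℵ₀` admits a faithful action on a
countable set. -/
theorem abelian_countably_representable (A : Type*) [CommGroup A]
    (hA : Cardinal.mk A ≤ Cardinal.continuum) :
    ∃ (X : Type) (_ : Countable X) (φ : A →* Equiv.Perm X), Function.Injective φ := by
  obtain ⟨Φ, hΦ⟩ := exists_injective_addMonoidHom_rat_prod_ratCircle (Additive A) hA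
  have hT : CountablyRepresentable
      (Multiplicative ((ℕ → ℚ) × (Nat.Primes → ℕ → AddCircle (1 : ℚ)))) :=
    .multiplicative_prod (.multiplicative_pi fun _ => .multiplicative_of_countable _)
      (.multiplicative_pi fun _ => .multiplicative_pi fun _ => .multiplicative_of_countable _)
  exact hT.of_injective (AddMonoidHom.toMultiplicativeRight Φ) hΦ
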